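/- arXiv:1209.6312 — 3 statements merged into one kernel-verified Lean document; each statement's English description precedes it below -/
import Mathlib

section
/- Let X_1 and X_2 be association schemes and let t ∈ ℕ. Then the tensor product X_1 ⊗ X_2 is extensible to height t if and only if both X_1 and X_2 are extensible to height t. -/
/-!
If `P₁` and `P₂` extend `X₁` and `X₂`, the products of their classes of equal height form a
presuperscheme extending `X₁ ⊗ X₂`, whose intersection numbers are products.

Conversely, let `P` extend `X₁ ⊗ X₂`. Permuting coordinates and projecting, a class of `P`
determines the relation of `X₁ ⊗ X₂` between any two coordinates of its tuples, and that relation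
decides whether their second components agree. So if one tuple of a class lies in the fibre
`Q₁ × {q₂}`, every tuple of that class starting in the fibre lies in it. This makes the
restriction of `P` to the fibre closed under projection and keeps its intersection numbers, so it
is a presuperscheme extending `X₁`; symmetrically for `X₂`.
-/

/-- The first factor tuple `(x_0, ..., x_m, z)` extracted from
`w = (x_0, ..., x_m, y_0, ..., y_n)`. -/
def fstTup {Q : Type} (m n : ℕ) (w : Fin (m + n + 2) → Q) (z : Q) :
    Fin (m + 2) → Q :=
  Fin.snoc (fun i : Fin (m + 1) => w (Fin.castLE (by omega) i)) z

/-- The second factor tuple `(z, y_0, ..., y_n)` extracted from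
`w = (x_0, ..., x_m, y_0, ..., y_n)`. -/
def sndTup {Q : Type} (m n : ℕ) (w : Fin (m + n + 2) → Q) (z : Q) :
    Fin (n + 2) → Q :=
  Fin.cons z (fun i : Fin (n + 1) => w ⟨m + 1 + i.1, by have := i.isLt; omega⟩)

/-- A height `t` presuperscheme on `Q`: a family of partitions `Γ n` of
`Q^(n+2)` (for `n ≤ t`) satisfying the identity (P1), projection (P2),
coordinate-permutation invariance (P3) and intersection (P4) properties. -/
structure PreScheme (Q : Type) [Fintype Q] (t : ℕ) where
  Γ : ∀ n : ℕ, Set (Set (Fin (n + 2) → Q))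
  nonempty : ∀ n ≤ t, ∀ C ∈ Γ n, C.Nonempty
  partition : ∀ n ≤ t, ∀ x : Fin (n + 2) → Q, ∃! C, C ∈ Γ n ∧ x ∈ C
  identity : {x : Fin 2 → Q | x 0 = x 1} ∈ Γ 0
  proj : ∀ n : ℕ, n + 1 ≤ t → ∀ C ∈ Γ (n + 1),
    {y : Fin (n + 2) → Q | ∃ x ∈ C, y = x ∘ Fin.castSucc} ∈ Γ n
  invariant : ∀ n ≤ t, ∀ C ∈ Γ n, ∀ τ : Equiv.Perm (Fin (n + 2)),
    {x : Fin (n + 2) → Q | x ∘ τ ∈ C} ∈ Γ n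
  inter : ∀ m n : ℕ, m + n ≤ t → ∀ Ci ∈ Γ m, ∀ Cj ∈ Γ n, ∀ Ck ∈ Γ (m + n),
    ∀ w ∈ Ck, ∀ w' ∈ Ck,
      {z : Q | fstTup m n w z ∈ Ci ∧ sndTup m n w z ∈ Cj}.ncard =
      {z : Q | fstTup m n w' z ∈ Ci ∧ sndTup m n w' z ∈ Cj}.ncard

/-- The relation on `Q × Q` viewed as a set of 2-tuples `Fin 2 → Q`. -/
def pairsToFun {Q : Type} (D : Set (Q × Q)) : Set (Fin 2 → Q) :=
  {x | (x 0, x 1) ∈ D}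

/-- An association scheme `(Q, Γ0)` is extensible to height `t` if it is
associated to some height `t` presuperscheme. -/
def Extensible (Q : Type) [Fintype Q] (Γ0 : Set (Set (Q × Q))) (t : ℕ) : Prop :=
  ∃ P : PreScheme Q t, P.Γ 0 = pairsToFun '' Γ0

/-- `Γ` is (the partition of) an association scheme on `Q`. -/
def IsAssocScheme (Q : Type) [Fintype Q] (Γ : Set (Set (Q × Q))) : Prop :=
  (∀ C ∈ Γ, C.Nonempty) ∧
  (∀ p : Q × Q, ∃! C, C ∈ Γ ∧ p ∈ C) ∧
  {p : Q × Q | p.1 = p.2} ∈ Γ ∧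
  (∀ C ∈ Γ, {p : Q × Q | (p.2, p.1) ∈ C} ∈ Γ) ∧
  (∀ Ci ∈ Γ, ∀ Cj ∈ Γ, ∀ Ck ∈ Γ, ∀ p ∈ Ck, ∀ q ∈ Ck,
    {z : Q | (p.1, z) ∈ Ci ∧ (z, p.2) ∈ Cj}.ncard =
    {z : Q | (q.1, z) ∈ Ci ∧ (z, q.2) ∈ Cj}.ncard)

/-- The tensor product partition `Γ₁ ⊗ Γ₂` on `(Q₁ × Q₂) × (Q₁ × Q₂)`. -/
def tensorΓ {Q₁ Q₂ : Type} (Γ₁ : Set (Set (Q₁ × Q₁))) (Γ₂ : Set (Set (Q₂ × Q₂))) :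
    Set (Set ((Q₁ × Q₂) × (Q₁ × Q₂))) :=
  {S | ∃ C ∈ Γ₁, ∃ D ∈ Γ₂,
    S = {p | (p.1.1, p.2.1) ∈ C ∧ (p.1.2, p.2.2) ∈ D}}

open Function

section Tuples

variable {Q Q' : Type}

lemma comp_fstTup (f : Q → Q') (m n : ℕ) (w : Fin (m + n + 2) → Q) (z : Q) :
    f ∘ fstTup m n w z = fstTup m n (f ∘ w) (f z) := by
  unfold fstTup
  rw [Fin.comp_snoc]
  rfl

lemma comp_sndTup (f : Q → Q') (m n : ℕ) (w : Fin (m + n + 2) → Q) (z : Q) :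
    f ∘ sndTup m n w z = sndTup m n (f ∘ w) (f z) := by
  unfold sndTup
  rw [Fin.comp_cons]
  rfl

lemma fstTup_zero (m n : ℕ) (w : Fin (m + n + 2) → Q) (z : Q) :
    fstTup m n w z 0 = w 0 := by
  unfold fstTup
  rw [← Fin.castSucc_zero, Fin.snoc_castSucc]
  rfl

lemma fstTup_last (m n : ℕ) (w : Fin (m + n + 2) → Q) (z : Q) :
    fstTup m n w z (Fin.last (m + 1)) = z :=
  Fin.snoc_last _ _

lemma Fin.exists_perm_zero_one {n : ℕ} {i j : Fin (n + 2)} (hij : i ≠ j) :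
    ∃ σ : Equiv.Perm (Fin (n + 2)), σ 0 = i ∧ σ 1 = j := by
  have hj : Equiv.swap 0 i j ≠ 0 := by
    rw [Ne, Equiv.swap_apply_eq_iff, Equiv.swap_apply_left]
    exact hij.symm
  refine ⟨Equiv.swap 0 i * Equiv.swap 1 (Equiv.swap 0 i j), ?_, by simp⟩
  rw [Equiv.Perm.mul_apply, Equiv.swap_apply_of_ne_of_ne Fin.zero_ne_one hj.symm,
    Equiv.swap_apply_left]

end Tuples

section Relations

variable {Q Q' : Type}

lemma IsAssocScheme.eq_diag_of_mem [Fintype Q] {Γ : Set (Set (Q × Q))}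
    (h : IsAssocScheme Q Γ) {D : Set (Q × Q)} (hD : D ∈ Γ) {a : Q} (ha : (a, a) ∈ D) :
    D = {p | p.1 = p.2} :=
  (h.2.1 (a, a)).unique ⟨hD, ha⟩ ⟨h.2.2.1, rfl⟩

lemma IsAssocScheme.nonempty [Fintype Q] {Γ : Set (Set (Q × Q))} (h : IsAssocScheme Q Γ) :
    Nonempty Q :=
  let ⟨⟨q, _⟩, _⟩ := h.1 _ h.2.2.1
  ⟨q⟩

def comapRel (g : Q' → Q) (Γ : Set (Set (Q × Q))) : Set (Set (Q' × Q')) :=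
  {S | ∃ C ∈ Γ, S = Prod.map g g ⁻¹' C ∧ S.Nonempty}

variable {Q₁ Q₂ : Type} {Γ₁ : Set (Set (Q₁ × Q₁))} {Γ₂ : Set (Set (Q₂ × Q₂))}

lemma comapRel_tensorΓ_left (hΓ₁ : ∀ C ∈ Γ₁, C.Nonempty) (hdiag : {p | p.1 = p.2} ∈ Γ₂)
    (q₂ : Q₂) : comapRel (·, q₂) (tensorΓ Γ₁ Γ₂) = Γ₁ := by
  ext S
  constructor
  · rintro ⟨_, ⟨C, hC, D, -, rfl⟩, rfl, hne⟩
    obtain ⟨p, hp⟩ := hne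
    convert hC using 1
    ext x
    simpa using fun _ => hp.2
  · intro hS
    obtain ⟨p, hp⟩ := hΓ₁ S hS
    refine ⟨_, ⟨S, hS, _, hdiag, rfl⟩, ?_, p, hp⟩
    ext x
    simp

lemma comapRel_tensorΓ_right (hΓ₂ : ∀ D ∈ Γ₂, D.Nonempty) (hdiag : {p | p.1 = p.2} ∈ Γ₁)
    (q₁ : Q₁) : comapRel (q₁, ·) (tensorΓ Γ₁ Γ₂) = Γ₂ := by
  ext S
  constructor
  · rintro ⟨_, ⟨C, -, D, hD, rfl⟩, rfl, hne⟩
    obtain ⟨p, hp⟩ := hne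
    convert hD using 1
    ext x
    simpa using fun _ => hp.1
  · intro hS
    obtain ⟨p, hp⟩ := hΓ₂ S hS
    refine ⟨_, ⟨_, hdiag, S, hS, rfl⟩, ?_, p, hp⟩
    ext x
    simp

lemma tensorΓ_snd_eq [Fintype Q₂] (h₂ : IsAssocScheme Q₂ Γ₂) :
    ∀ S ∈ tensorΓ Γ₁ Γ₂, ∀ p ∈ S, ∀ q ∈ S, p.1.2 = p.2.2 → q.1.2 = q.2.2 := by
  rintro _ ⟨C, -, D, hD, rfl⟩ p hp q hq hpq
  have hp2 := hp.2
  rw [hpq] at hp2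
  exact (h₂.eq_diag_of_mem hD hp2 ▸ hq.2 :)

lemma tensorΓ_fst_eq [Fintype Q₁] (h₁ : IsAssocScheme Q₁ Γ₁) :
    ∀ S ∈ tensorΓ Γ₁ Γ₂, ∀ p ∈ S, ∀ q ∈ S, p.1.1 = p.2.1 → q.1.1 = q.2.1 := by
  rintro _ ⟨C, hC, D, -, rfl⟩ p hp q hq hpq
  have hp1 := hp.1
  rw [hpq] at hp1
  exact (h₁.eq_diag_of_mem hC hp1 ▸ hq.1 :)

end Relations

namespace PreScheme

variable {Q : Type} [Fintype Q] {t : ℕ} (P : PreScheme Q t)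

lemma eq_of_mem {n : ℕ} (hn : n ≤ t) {C C' : Set (Fin (n + 2) → Q)} (hC : C ∈ P.Γ n)
    (hC' : C' ∈ P.Γ n) {x : Fin (n + 2) → Q} (h : x ∈ C) (h' : x ∈ C') : C = C' :=
  (P.partition n hn x).unique ⟨hC, h⟩ ⟨hC', h'⟩

lemma exists_mem {n : ℕ} (hn : n ≤ t) (x : Fin (n + 2) → Q) : ∃ C ∈ P.Γ n, x ∈ C :=
  (P.partition n hn x).exists

lemma exists_comp_castLE_mem {n : ℕ} (hn : n ≤ t) {C : Set (Fin (n + 2) → Q)}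
    (hC : C ∈ P.Γ n) : ∃ E ∈ P.Γ 0, ∀ w ∈ C, w ∘ Fin.castLE (Nat.le_add_left 2 n) ∈ E := by
  induction n with
  | zero => exact ⟨C, hC, fun w hw => hw⟩
  | succ n ih =>
    obtain ⟨E, hE, hmem⟩ := ih (by omega) (P.proj n hn C hC)
    exact ⟨E, hE, fun w hw => hmem _ ⟨w, hw, rfl⟩⟩

lemma exists_pair_mem {n : ℕ} (hn : n ≤ t) {C : Set (Fin (n + 2) → Q)} (hC : C ∈ P.Γ n)
    {i j : Fin (n + 2)} (hij : i ≠ j) : ∃ E ∈ P.Γ 0, ∀ w ∈ C, ![w i, w j] ∈ E := by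
  obtain ⟨σ, hσ0, hσ1⟩ := Fin.exists_perm_zero_one hij
  obtain ⟨E, hE, hmem⟩ := P.exists_comp_castLE_mem hn (P.invariant n hn C hC σ⁻¹)
  refine ⟨E, hE, fun w hw => ?_⟩
  convert hmem (w ∘ σ) (by simpa [Function.comp_assoc] using hw) using 1
  ext k
  fin_cases k
  · simp [hσ0]
  · simp only [← hσ1]
    congr 1

def KerInvariant {R : Type} (π : Q → R) : Prop :=
  ∀ n ≤ t, ∀ C ∈ P.Γ n, ∀ w ∈ C, ∀ w' ∈ C, ∀ i j : Fin (n + 2),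
    π (w i) = π (w j) → π (w' i) = π (w' j)

lemma kerInvariant_of_Γ_zero {R : Type} {Γ : Set (Set (Q × Q))} (hP : P.Γ 0 = pairsToFun '' Γ)
    {π : Q → R} (hΓ : ∀ D ∈ Γ, ∀ p ∈ D, ∀ q ∈ D, π p.1 = π p.2 → π q.1 = π q.2) :
    P.KerInvariant π := by
  intro n hn C hC w hw w' hw' i j h
  rcases eq_or_ne i j with rfl | hij
  · rfl
  obtain ⟨E, hE, hmem⟩ := P.exists_pair_mem hn hC hij
  rw [hP] at hE
  obtain ⟨D, hD, rfl⟩ := hE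
  exact hΓ D hD _ (hmem w hw) _ (hmem w' hw') h

section Restrict

variable {Q' R : Type} {g : Q' → Q} {π : Q → R} {c : R}

lemma mem_range_of_mem (hg : Set.range g = π ⁻¹' {c}) (hπ : P.KerInvariant π) {n : ℕ}
    (hn : n ≤ t) {C : Set (Fin (n + 2) → Q)} (hC : C ∈ P.Γ n) {v : Fin (n + 2) → Q'}
    (hv : g ∘ v ∈ C) {x : Fin (n + 2) → Q} (hx : x ∈ C) (h0 : x 0 ∈ Set.range g)
    (i : Fin (n + 2)) : x i ∈ Set.range g := by
  have hfib : ∀ q, q ∈ Set.range g ↔ π q = c := fun q => by rw [hg]; rfl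
  rw [hfib] at h0 ⊢
  have hvc : ∀ k, π (g (v k)) = c := fun k => (hfib _).1 ⟨v k, rfl⟩
  exact (hπ n hn C hC _ hv x hx i 0 ((hvc i).trans (hvc 0).symm)).trans h0

variable [Fintype Q'] [Nonempty Q']

def restrict (hg : Injective g) (hgπ : Set.range g = π ⁻¹' {c}) (hπ : P.KerInvariant π) :
    PreScheme Q' t where
  Γ n := {S | ∃ C ∈ P.Γ n, S = (g ∘ ·) ⁻¹' C ∧ S.Nonempty}
  nonempty := by
    rintro n - S ⟨C, -, -, hS⟩
    exact hS
  partition := by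
    intro n hn x
    obtain ⟨C, hC, hx⟩ := P.exists_mem hn (g ∘ x)
    refine ⟨_, ⟨⟨C, hC, rfl, x, hx⟩, hx⟩, ?_⟩
    rintro _ ⟨⟨C', hC', rfl, -⟩, hxC'⟩
    rw [P.eq_of_mem hn hC' hC hxC' hx]
  identity := by
    refine ⟨_, P.identity, ?_, fun _ => Classical.arbitrary Q', rfl⟩
    ext x
    exact hg.eq_iff.symm
  proj := by
    rintro n hn _ ⟨C, hC, rfl, v, hv⟩
    refine ⟨_, P.proj n hn C hC, ?_, v ∘ Fin.castSucc, v, hv, rfl⟩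
    ext y
    constructor
    · rintro ⟨x, hx, rfl⟩
      exact ⟨g ∘ x, hx, rfl⟩
    · rintro ⟨x, hx, hxy : g ∘ y = x ∘ Fin.castSucc⟩
      have hy0 : x 0 = g (y 0) := (congrFun hxy 0).symm
      obtain ⟨b, hb⟩ := P.mem_range_of_mem hgπ hπ hn hC hv hx ⟨y 0, hy0.symm⟩ (Fin.last _)
      refine ⟨Fin.snoc y b, ?_, by simp⟩
      show g ∘ Fin.snoc y b ∈ C
      rw [Fin.comp_snoc, hb, hxy]
      convert hx using 1
      exact Fin.snoc_init_self x
  invariant := by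
    rintro n hn _ ⟨C, hC, rfl, x, hx⟩ τ
    refine ⟨_, P.invariant n hn C hC τ, rfl, x ∘ τ.symm, ?_⟩
    simpa [Set.mem_preimage, Function.comp_assoc] using hx
  inter := by
    rintro m n hmn _ ⟨Ci, hCi, rfl, v, hv⟩ _ ⟨Cj, hCj, rfl, -⟩ _ ⟨Ck, hCk, rfl, -⟩ w hw w' hw'
    have hcard : ∀ x : Fin (m + n + 2) → Q',
        {z | fstTup m n x z ∈ (g ∘ ·) ⁻¹' Ci ∧ sndTup m n x z ∈ (g ∘ ·) ⁻¹' Cj}.ncard =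
          {z | fstTup m n (g ∘ x) z ∈ Ci ∧ sndTup m n (g ∘ x) z ∈ Cj}.ncard := by
      intro x
      rw [← Set.ncard_image_of_injective _ hg]
      congr 1
      ext z
      constructor
      · rintro ⟨z, ⟨h₁, h₂⟩, rfl⟩
        rw [Set.mem_preimage, comp_fstTup] at h₁
        rw [Set.mem_preimage, comp_sndTup] at h₂
        exact ⟨h₁, h₂⟩
      · rintro ⟨h₁, h₂⟩
        obtain ⟨z, rfl⟩ : z ∈ Set.range g := by
          simpa [fstTup_last] using P.mem_range_of_mem hgπ hπ (by omega) hCi hv h₁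
            (by rw [fstTup_zero]; exact ⟨x 0, rfl⟩) (Fin.last _)
        refine ⟨z, ⟨?_, ?_⟩, rfl⟩
        · rwa [Set.mem_preimage, comp_fstTup]
        · rwa [Set.mem_preimage, comp_sndTup]
    rw [hcard w, hcard w']
    exact P.inter m n hmn Ci hCi Cj hCj Ck hCk _ hw _ hw'

lemma restrict_Γ_zero (hg : Injective g) (hgπ : Set.range g = π ⁻¹' {c})
    (hπ : P.KerInvariant π) {Γ : Set (Set (Q × Q))} (hP : P.Γ 0 = pairsToFun '' Γ) :
    (P.restrict hg hgπ hπ).Γ 0 = pairsToFun '' comapRel g Γ := by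
  ext S
  constructor
  · rintro ⟨_, hC, rfl, x, hx⟩
    rw [hP] at hC
    obtain ⟨D, hD, rfl⟩ := hC
    exact ⟨_, ⟨D, hD, rfl, (x 0, x 1), hx⟩, rfl⟩
  · rintro ⟨_, ⟨D, hD, rfl, p, hp⟩, rfl⟩
    exact ⟨pairsToFun D, hP ▸ ⟨D, hD, rfl⟩, rfl, ![p.1, p.2], hp⟩

end Restrict

section Tensor

variable {Q₁ Q₂ : Type} [Fintype Q₁] [Fintype Q₂]

def tupleProd {k : ℕ} (C : Set (Fin k → Q₁)) (D : Set (Fin k → Q₂)) :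
    Set (Fin k → Q₁ × Q₂) :=
  {x | Prod.fst ∘ x ∈ C ∧ Prod.snd ∘ x ∈ D}

def tensor (P₁ : PreScheme Q₁ t) (P₂ : PreScheme Q₂ t) : PreScheme (Q₁ × Q₂) t where
  Γ n := {E | ∃ C ∈ P₁.Γ n, ∃ D ∈ P₂.Γ n, E = tupleProd C D}
  nonempty := by
    rintro n hn _ ⟨C, hC, D, hD, rfl⟩
    obtain ⟨x₁, hx₁⟩ := P₁.nonempty n hn C hC
    obtain ⟨x₂, hx₂⟩ := P₂.nonempty n hn D hD
    exact ⟨fun i => (x₁ i, x₂ i), hx₁, hx₂⟩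
  partition := by
    intro n hn x
    obtain ⟨C, hC, h₁⟩ := P₁.exists_mem hn (Prod.fst ∘ x)
    obtain ⟨D, hD, h₂⟩ := P₂.exists_mem hn (Prod.snd ∘ x)
    refine ⟨tupleProd C D, ⟨⟨C, hC, D, hD, rfl⟩, h₁, h₂⟩, ?_⟩
    rintro _ ⟨⟨C', hC', D', hD', rfl⟩, hx₁, hx₂⟩
    rw [P₁.eq_of_mem hn hC' hC hx₁ h₁, P₂.eq_of_mem hn hD' hD hx₂ h₂]
  identity := by
    refine ⟨_, P₁.identity, _, P₂.identity, ?_⟩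
    ext x
    exact Prod.ext_iff
  proj := by
    rintro n hn _ ⟨C, hC, D, hD, rfl⟩
    refine ⟨_, P₁.proj n hn C hC, _, P₂.proj n hn D hD, ?_⟩
    ext y
    constructor
    · rintro ⟨x, ⟨hx₁, hx₂⟩, rfl⟩
      exact ⟨⟨Prod.fst ∘ x, hx₁, rfl⟩, ⟨Prod.snd ∘ x, hx₂, rfl⟩⟩
    · rintro ⟨⟨x₁, hx₁, hy₁⟩, ⟨x₂, hx₂, hy₂⟩⟩
      refine ⟨fun i => (x₁ i, x₂ i), ⟨hx₁, hx₂⟩, ?_⟩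
      funext i
      exact Prod.ext (congrFun hy₁ i) (congrFun hy₂ i)
  invariant := by
    rintro n hn _ ⟨C, hC, D, hD, rfl⟩ τ
    exact ⟨_, P₁.invariant n hn C hC τ, _, P₂.invariant n hn D hD τ, rfl⟩
  inter := by
    rintro m n hmn _ ⟨Ci₁, hCi₁, Ci₂, hCi₂, rfl⟩ _ ⟨Cj₁, hCj₁, Cj₂, hCj₂, rfl⟩
      _ ⟨Ck₁, hCk₁, Ck₂, hCk₂, rfl⟩ w ⟨hw₁, hw₂⟩ w' ⟨hw'₁, hw'₂⟩
    have hprod : ∀ v : Fin (m + n + 2) → Q₁ × Q₂,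
        {z | fstTup m n v z ∈ tupleProd Ci₁ Ci₂ ∧ sndTup m n v z ∈ tupleProd Cj₁ Cj₂} =
          {a | fstTup m n (Prod.fst ∘ v) a ∈ Ci₁ ∧ sndTup m n (Prod.fst ∘ v) a ∈ Cj₁} ×ˢ
          {b | fstTup m n (Prod.snd ∘ v) b ∈ Ci₂ ∧ sndTup m n (Prod.snd ∘ v) b ∈ Cj₂} := by
      intro v
      ext z
      simp only [tupleProd, Set.mem_ofPred_eq, Set.mem_prod, comp_fstTup, comp_sndTup]
      tauto
    rw [hprod w, hprod w', Set.ncard_prod, Set.ncard_prod,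
      P₁.inter m n hmn Ci₁ hCi₁ Cj₁ hCj₁ Ck₁ hCk₁ _ hw₁ _ hw'₁,
      P₂.inter m n hmn Ci₂ hCi₂ Cj₂ hCj₂ Ck₂ hCk₂ _ hw₂ _ hw'₂]

end Tensor

end PreScheme

namespace Extensible

variable {Q₁ Q₂ : Type} [Fintype Q₁] [Fintype Q₂] {Γ₁ : Set (Set (Q₁ × Q₁))}
  {Γ₂ : Set (Set (Q₂ × Q₂))} {t : ℕ}

lemma tensor (h₁ : Extensible Q₁ Γ₁ t) (h₂ : Extensible Q₂ Γ₂ t) :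
    Extensible (Q₁ × Q₂) (tensorΓ Γ₁ Γ₂) t := by
  obtain ⟨P₁, hP₁⟩ := h₁
  obtain ⟨P₂, hP₂⟩ := h₂
  refine ⟨P₁.tensor P₂, ?_⟩
  ext E
  constructor
  · rintro ⟨_, hC, _, hD, rfl⟩
    rw [hP₁] at hC
    rw [hP₂] at hD
    obtain ⟨C, hC, rfl⟩ := hC
    obtain ⟨D, hD, rfl⟩ := hD
    exact ⟨_, ⟨C, hC, D, hD, rfl⟩, rfl⟩
  · rintro ⟨_, ⟨C, hC, D, hD, rfl⟩, rfl⟩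
    exact ⟨_, hP₁ ▸ Set.mem_image_of_mem _ hC, _, hP₂ ▸ Set.mem_image_of_mem _ hD, rfl⟩

lemma of_tensor_left (h₁ : IsAssocScheme Q₁ Γ₁) (h₂ : IsAssocScheme Q₂ Γ₂)
    (h : Extensible (Q₁ × Q₂) (tensorΓ Γ₁ Γ₂) t) : Extensible Q₁ Γ₁ t := by
  obtain ⟨P, hP⟩ := h
  have := h₁.nonempty
  obtain ⟨q₂⟩ := h₂.nonempty
  have hfib : Set.range (fun a : Q₁ => (a, q₂)) = Prod.snd ⁻¹' {q₂} := by
    ext p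
    exact ⟨by rintro ⟨a, rfl⟩; rfl, fun hp => ⟨p.1, Prod.ext rfl hp.symm⟩⟩
  refine ⟨P.restrict (Prod.mk_left_injective q₂) hfib
    (P.kerInvariant_of_Γ_zero hP (tensorΓ_snd_eq h₂)), ?_⟩
  rw [P.restrict_Γ_zero _ _ _ hP, comapRel_tensorΓ_left h₁.1 h₂.2.2.1]

lemma of_tensor_right (h₁ : IsAssocScheme Q₁ Γ₁) (h₂ : IsAssocScheme Q₂ Γ₂)
    (h : Extensible (Q₁ × Q₂) (tensorΓ Γ₁ Γ₂) t) : Extensible Q₂ Γ₂ t := by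
  obtain ⟨P, hP⟩ := h
  obtain ⟨q₁⟩ := h₁.nonempty
  have := h₂.nonempty
  have hfib : Set.range (fun b : Q₂ => (q₁, b)) = Prod.fst ⁻¹' {q₁} := by
    ext p
    exact ⟨by rintro ⟨b, rfl⟩; rfl, fun hp => ⟨p.2, Prod.ext hp.symm rfl⟩⟩
  refine ⟨P.restrict (Prod.mk_right_injective q₁) hfib
    (P.kerInvariant_of_Γ_zero hP (tensorΓ_fst_eq h₁)), ?_⟩
  rw [P.restrict_Γ_zero _ _ _ hP, comapRel_tensorΓ_right h₂.1 h₁.2.2.1]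

end Extensible

theorem stmt_8_general {Q₁ Q₂ : Type} [Fintype Q₁] [Fintype Q₂]
    (Γ₁ : Set (Set (Q₁ × Q₁))) (Γ₂ : Set (Set (Q₂ × Q₂)))
    (h₁ : IsAssocScheme Q₁ Γ₁) (h₂ : IsAssocScheme Q₂ Γ₂) (t : ℕ) :
    Extensible (Q₁ × Q₂) (tensorΓ Γ₁ Γ₂) t ↔
      Extensible Q₁ Γ₁ t ∧ Extensible Q₂ Γ₂ t :=
  ⟨fun h => ⟨h.of_tensor_left h₁ h₂, h.of_tensor_right h₁ h₂⟩, fun h => h.1.tensor h.2⟩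

/-- the tensor product of two association schemes is extensible
to height `t` iff both factors are extensible to height `t`. -/
theorem stmt_8 {Q₁ Q₂ : Type} [Fintype Q₁] [Fintype Q₂]
    [Nonempty Q₁] [Nonempty Q₂]
    (Γ₁ : Set (Set (Q₁ × Q₁))) (Γ₂ : Set (Set (Q₂ × Q₂)))
    (h₁ : IsAssocScheme Q₁ Γ₁) (h₂ : IsAssocScheme Q₂ Γ₂) (t : ℕ) :
    Extensible (Q₁ × Q₂) (tensorΓ Γ₁ Γ₂) t ↔
      Extensible Q₁ Γ₁ t ∧ Extensible Q₂ Γ₂ t :=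
  stmt_8_general Γ₁ Γ₂ h₁ h₂ t
end

section
/- For any finite nonempty set Q, the family Γ* with Γ^n for each 0 ≤ n ≤ t defined as the partition of Q^{n+2} into the orbits of the diagonal action of the symmetric group Sym(Q) on Q^{n+2} (equivalently, two tuples lie in the same class iff they have the same equality pattern: coordinates i and j are equal in one tuple iff they are equal in the other) is a height t presuperscheme for every t ∈ ℕ. In particular, the trivial association scheme on Q (whose classes are the identity relation and its complement) is extensible to every height, i.e., has maximal height ∞. -/
/-! ### Auxiliary material: orbits of the diagonal symmetric-group action -/

/-- The orbit of a tuple under the diagonal action of `Sym(Q)`. -/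
def orb {Q ι : Type} (x : ι → Q) : Set (ι → Q) :=
  {y | ∃ g : Equiv.Perm Q, y = ⇑g ∘ x}

lemma mem_orb_self {Q ι : Type} (x : ι → Q) : x ∈ orb x :=
  ⟨1, by funext i; simp⟩

lemma orb_eq_of_mem {Q ι : Type} {x y : ι → Q} (h : y ∈ orb x) :
    orb y = orb x := by
  obtain ⟨g, rfl⟩ := h
  ext z
  constructor
  · rintro ⟨h', rfl⟩
    exact ⟨g.trans h', by funext i; simp [Equiv.trans_apply]⟩
  · rintro ⟨h', rfl⟩
    exact ⟨g.symm.trans h', by funext i; simp [Equiv.trans_apply]⟩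

lemma comp_mem_orb {Q ι : Type} (g : Equiv.Perm Q) {x y : ι → Q}
    (h : y ∈ orb x) : ⇑g ∘ y ∈ orb x := by
  obtain ⟨h', rfl⟩ := h
  exact ⟨h'.trans g, by funext i; simp [Equiv.trans_apply]⟩

lemma fstTup_comp {Q : Type} (m n : ℕ) (g : Equiv.Perm Q)
    (w : Fin (m + n + 2) → Q) (z : Q) :
    fstTup m n (⇑g ∘ w) (g z) = ⇑g ∘ fstTup m n w z := by
  unfold fstTup
  rw [Fin.comp_snoc]
  rfl

lemma sndTup_comp {Q : Type} (m n : ℕ) (g : Equiv.Perm Q)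
    (w : Fin (m + n + 2) → Q) (z : Q) :
    sndTup m n (⇑g ∘ w) (g z) = ⇑g ∘ sndTup m n w z := by
  unfold sndTup
  rw [Fin.comp_cons]
  rfl

lemma orb_const {Q : Type} (q : Q) :
    orb (fun _ : Fin 2 => q) = {y : Fin 2 → Q | y 0 = y 1} := by
  classical
  ext y
  constructor
  · rintro ⟨g, rfl⟩; rfl
  · intro h
    refine ⟨Equiv.swap q (y 0), ?_⟩
    funext i
    fin_cases i
    · simp
    · simpa using h.symm.trans (Equiv.swap_apply_left q (y 0)).symm

lemma exists_perm_two {Q : Type} (a b c d : Q) (hab : a ≠ b) (hcd : c ≠ d) :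
    ∃ g : Equiv.Perm Q, g a = c ∧ g b = d := by
  classical
  refine ⟨(Equiv.swap a c).trans (Equiv.swap ((Equiv.swap a c) b) d), ?_, ?_⟩
  · have h1 : (Equiv.swap a c) b ≠ c := by
      intro h
      have := (Equiv.swap a c).injective (h.trans (Equiv.swap_apply_left a c).symm)
      exact hab this.symm
    simp [Equiv.trans_apply, Equiv.swap_apply_left,
      Equiv.swap_apply_of_ne_of_ne (Ne.symm h1) hcd]
  · simp [Equiv.trans_apply, Equiv.swap_apply_left]

lemma orb_ne {Q : Type} (x : Fin 2 → Q) (hx : x 0 ≠ x 1) :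
    orb x = {y : Fin 2 → Q | y 0 ≠ y 1} := by
  ext y
  constructor
  · rintro ⟨g, rfl⟩
    exact fun h => hx (g.injective h)
  · intro h
    obtain ⟨g, hg0, hg1⟩ := exists_perm_two (x 0) (x 1) (y 0) (y 1) hx h
    refine ⟨g, ?_⟩
    funext i
    fin_cases i
    · exact hg0.symm
    · exact hg1.symm

lemma inter_image {Q : Type} (m n : ℕ) (g : Equiv.Perm Q)
    (xi : Fin (m + 2) → Q) (xj : Fin (n + 2) → Q) (w : Fin (m + n + 2) → Q) :
    {z : Q | fstTup m n (⇑g ∘ w) z ∈ orb xi ∧ sndTup m n (⇑g ∘ w) z ∈ orb xj} =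
      ⇑g '' {z : Q | fstTup m n w z ∈ orb xi ∧ sndTup m n w z ∈ orb xj} := by
  ext z
  constructor
  · rintro ⟨h1, h2⟩
    refine ⟨g.symm z, ⟨?_, ?_⟩, g.apply_symm_apply z⟩
    · have hw : ⇑g.symm ∘ (⇑g ∘ w) = w := by funext i; simp
      have h := fstTup_comp m n g.symm (⇑g ∘ w) z
      rw [hw] at h
      rw [h]
      exact comp_mem_orb _ h1
    · have hw : ⇑g.symm ∘ (⇑g ∘ w) = w := by funext i; simp
      have h := sndTup_comp m n g.symm (⇑g ∘ w) z
      rw [hw] at h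
      rw [h]
      exact comp_mem_orb _ h2
  · rintro ⟨z0, ⟨h1, h2⟩, rfl⟩
    rw [Set.mem_setOf_eq, fstTup_comp, sndTup_comp]
    exact ⟨comp_mem_orb g h1, comp_mem_orb g h2⟩

/-- The orbit presuperscheme of height `t`. -/
def orbScheme (Q : Type) [Fintype Q] [Nonempty Q] (t : ℕ) : PreScheme Q t where
  Γ n := {C | ∃ x : Fin (n + 2) → Q, C = orb x}
  nonempty := by
    rintro n - C ⟨x, rfl⟩
    exact ⟨x, mem_orb_self x⟩
  partition := by
    rintro n - x
    refine ⟨orb x, ⟨⟨x, rfl⟩, mem_orb_self x⟩, ?_⟩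
    rintro C ⟨⟨x', rfl⟩, hx⟩
    exact (orb_eq_of_mem hx).symm
  identity := ⟨fun _ => Classical.arbitrary Q, (orb_const _).symm⟩
  proj := by
    rintro n - C ⟨x0, rfl⟩
    refine ⟨x0 ∘ Fin.castSucc, ?_⟩
    ext y
    constructor
    · rintro ⟨x, ⟨g, rfl⟩, rfl⟩
      exact ⟨g, rfl⟩
    · rintro ⟨g, rfl⟩
      exact ⟨⇑g ∘ x0, ⟨g, rfl⟩, rfl⟩
  invariant := by
    rintro n - C ⟨x0, rfl⟩ τ
    refine ⟨x0 ∘ ⇑τ.symm, ?_⟩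
    ext x
    constructor
    · rintro ⟨g, h⟩
      refine ⟨g, ?_⟩
      funext i
      have h2 := congrFun h (τ.symm i)
      simpa using h2
    · rintro ⟨g, rfl⟩
      refine ⟨g, ?_⟩
      funext i
      simp [Function.comp]
  inter := by
    rintro m n - Ci ⟨xi, rfl⟩ Cj ⟨xj, rfl⟩ Ck ⟨xk, rfl⟩ w ⟨g1, rfl⟩ w' ⟨g2, rfl⟩
    rw [inter_image m n g1 xi xj xk, inter_image m n g2 xi xj xk,
      Set.ncard_image_of_injective _ g1.injective,
      Set.ncard_image_of_injective _ g2.injective]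

/-- the orbit partitions of the diagonal action of the full
symmetric group `Sym(Q)` on the powers `Q^(n+2)` form a height `t`
presuperscheme for every `t`; in particular the trivial association scheme on
`Q` (whose classes are the identity relation and its complement, discarding an
empty complement) is extensible to every height. -/
theorem stmt_9 {Q : Type} [Fintype Q] [Nonempty Q] :
    (∀ t : ℕ, ∃ P : PreScheme Q t, ∀ n : ℕ,
      P.Γ n = {C | ∃ x : Fin (n + 2) → Q,
        C = {y | ∃ g : Equiv.Perm Q, y = ⇑g ∘ x}}) ∧
    (∀ t : ℕ, Extensible Q
      {C | (C = {p : Q × Q | p.1 = p.2} ∨ C = {p : Q × Q | p.1 ≠ p.2}) ∧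
        C.Nonempty} t) := by
  constructor
  · intro t
    exact ⟨orbScheme Q t, fun n => rfl⟩
  · intro t
    refine ⟨orbScheme Q t, ?_⟩
    ext C
    constructor
    · rintro ⟨x, rfl⟩
      by_cases h : x 0 = x 1
      · refine ⟨{p : Q × Q | p.1 = p.2},
          ⟨Or.inl rfl, ⟨(x 0, x 0), rfl⟩⟩, ?_⟩
        have hx : x = fun _ => x 0 := by
          funext i
          fin_cases i
          · rfl
          · exact h.symm
        rw [hx, orb_const]
        rfl
      · refine ⟨{p : Q × Q | p.1 ≠ p.2},
          ⟨Or.inr rfl, ⟨(x 0, x 1), h⟩⟩, ?_⟩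
        rw [orb_ne x h]
        rfl
    · rintro ⟨D, ⟨hD | hD, hne⟩, rfl⟩
      · subst hD
        exact ⟨fun _ => Classical.arbitrary Q, by rw [orb_const]; rfl⟩
      · subst hD
        obtain ⟨⟨a, b⟩, hab⟩ := hne
        refine ⟨![a, b], ?_⟩
        rw [orb_ne ![a, b] (by simpa using hab)]
        rfl
end

section
/- Let X = (Q, Γ) be an association scheme of order d = |Q|. Then t_max(X) = ∞, that is, X is extensible to height t for every t ∈ ℕ, if and only if X is extensible to height d − 2. -/
namespace StarExt


open Function

lemma snoc_lt {α : Type*} {k : ℕ} (u : Fin k → α) (z : α) (p : Fin (k+1)) (hp : p.1 < k) :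
    (Fin.snoc u z : Fin (k+1) → α) p = u ⟨p.1, hp⟩ := by
  simp [Fin.snoc, hp]; rfl

lemma snoc_last' {α : Type*} {k : ℕ} (u : Fin k → α) (z : α) (p : Fin (k+1)) (hp : p.1 = k) :
    (Fin.snoc u z : Fin (k+1) → α) p = z := by
  have h : p = Fin.last k := Fin.ext hp
  rw [h, Fin.snoc_last]

lemma cons_pos {α : Type*} {k : ℕ} (a : α) (u : Fin k → α) (p : Fin (k+1)) (hp : 0 < p.1)
    (hp' : p.1 - 1 < k) : (Fin.cons a u : Fin (k+1) → α) p = u ⟨p.1 - 1, hp'⟩ := by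
  cases p using Fin.cases with
  | zero => simp at hp
  | succ q => rw [Fin.cons_succ]; exact congrArg u (Fin.ext (by simp))

/-- the injection `Fin (m+1) → Fin (m+2)` skipping `j` -/
def delIdx {m : ℕ} (j : Fin (m+2)) (q : Fin (m+1)) : Fin (m+2) :=
  if q.1 < j.1 then ⟨q.1, by omega⟩ else ⟨q.1 + 1, by omega⟩

/-- the retraction `Fin (m+2) → Fin (m+1)` collapsing `j` onto `i` -/
def colIdx {m : ℕ} (i j : Fin (m+2)) (p : Fin (m+2)) : Fin (m+1) :=
  if p.1 = j.1 then
    (if _h2 : i.1 < j.1 then ⟨i.1, by have := j.2; omega⟩ else ⟨i.1 - 1, by have := i.2; omega⟩)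
  else if _h : p.1 < j.1 then ⟨p.1, by have := j.2; omega⟩
  else ⟨p.1 - 1, by have := p.2; omega⟩

lemma delIdx_val {m : ℕ} (j : Fin (m+2)) (q : Fin (m+1)) :
    (delIdx j q).1 = if q.1 < j.1 then q.1 else q.1 + 1 := by
  unfold delIdx; split_ifs <;> rfl

lemma colIdx_val {m : ℕ} (i j : Fin (m+2)) (p : Fin (m+2)) :
    (colIdx i j p).1 = if p.1 = j.1 then (if i.1 < j.1 then i.1 else i.1 - 1)
      else if p.1 < j.1 then p.1 else p.1 - 1 := by
  unfold colIdx; split_ifs <;> rfl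

lemma colIdx_delIdx {m : ℕ} (i j : Fin (m+2)) (q : Fin (m+1)) :
    colIdx i j (delIdx j q) = q := by
  apply Fin.ext
  rw [colIdx_val, delIdx_val]
  split_ifs <;> omega

lemma delIdx_colIdx {m : ℕ} (i j : Fin (m+2)) (p : Fin (m+2)) (hp : p ≠ j) :
    delIdx j (colIdx i j p) = p := by
  have hv : p.1 ≠ j.1 := fun h => hp (Fin.ext h)
  apply Fin.ext
  rw [delIdx_val, colIdx_val]
  have := p.2
  split_ifs <;> omega

lemma colIdx_self {m : ℕ} (i j : Fin (m+2)) (hij : i ≠ j) :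
    colIdx i j j = colIdx i j i := by
  have hv : i.1 ≠ j.1 := fun h => hij (Fin.ext h)
  apply Fin.ext
  rw [colIdx_val, colIdx_val]
  split_ifs <;> omega

lemma eq_comp_colIdx {α : Type*} {m : ℕ} {i j : Fin (m+2)} (hij : i ≠ j)
    (x : Fin (m+2) → α) (hx : x i = x j) :
    x = (x ∘ delIdx j) ∘ colIdx i j := by
  funext p
  by_cases hp : p = j
  · subst hp
    simp only [comp_apply, colIdx_self i p hij, delIdx_colIdx i p i hij]
    exact hx.symm
  · simp only [comp_apply, delIdx_colIdx i j p hp]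


open Function

variable {Q : Type} [Fintype Q] {T : ℕ} (P : PreScheme Q T)

/-- `x` and `y` lie in a common class of `Γ n`. -/
def sim (n : ℕ) (x y : Fin (n+2) → Q) : Prop := ∃ C ∈ P.Γ n, x ∈ C ∧ y ∈ C

variable {P}

lemma sim_refl {n : ℕ} (hn : n ≤ T) (x : Fin (n+2) → Q) : sim P n x x := by
  obtain ⟨C, hC, -⟩ := P.partition n hn x
  exact ⟨C, hC.1, hC.2, hC.2⟩

lemma sim_symm {n : ℕ} {x y : Fin (n+2) → Q} (h : sim P n x y) : sim P n y x := by
  obtain ⟨C, hC, hx, hy⟩ := h; exact ⟨C, hC, hy, hx⟩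

lemma class_eq {n : ℕ} (hn : n ≤ T) {C C' : Set (Fin (n+2) → Q)} (hC : C ∈ P.Γ n)
    (hC' : C' ∈ P.Γ n) {x : Fin (n+2) → Q} (hx : x ∈ C) (hx' : x ∈ C') : C = C' :=
  (P.partition n hn x).unique ⟨hC, hx⟩ ⟨hC', hx'⟩

lemma mem_of_sim {n : ℕ} (hn : n ≤ T) {C : Set (Fin (n+2) → Q)} (hC : C ∈ P.Γ n)
    {x y : Fin (n+2) → Q} (hx : x ∈ C) (h : sim P n x y) : y ∈ C := by
  obtain ⟨C', hC', hx', hy'⟩ := h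
  rwa [← class_eq hn hC' hC hx' hx]

lemma sim_trans {n : ℕ} (hn : n ≤ T) {x y z : Fin (n+2) → Q}
    (h1 : sim P n x y) (h2 : sim P n y z) : sim P n x z := by
  obtain ⟨C, hC, hx, hy⟩ := h1
  exact ⟨C, hC, hx, mem_of_sim hn hC hy h2⟩

lemma sim_perm {n : ℕ} (hn : n ≤ T) {x y : Fin (n+2) → Q} (τ : Equiv.Perm (Fin (n+2)))
    (h : sim P n x y) : sim P n (x ∘ τ) (y ∘ τ) := by
  obtain ⟨C, hC, hx, hy⟩ := h
  have hcomp : ∀ v : Fin (n+2) → Q, (v ∘ ⇑τ) ∘ ⇑τ⁻¹ = v := by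
    intro v; funext p; simp [Equiv.apply_symm_apply]
  refine ⟨{v | v ∘ ⇑τ⁻¹ ∈ C}, P.invariant n hn C hC τ⁻¹, ?_, ?_⟩ <;>
    simp only [Set.mem_setOf_eq, hcomp] <;> assumption

open Function

variable {Q : Type} [Fintype Q] {T : ℕ} {P : PreScheme Q T}

lemma sim_castSucc {n : ℕ} (hn1 : n+1 ≤ T) {x y : Fin (n+3) → Q} (h : sim P (n+1) x y) :
    sim P n (x ∘ Fin.castSucc) (y ∘ Fin.castSucc) := by
  obtain ⟨C, hC, hx, hy⟩ := h
  exact ⟨_, P.proj n hn1 C hC, ⟨x, hx, rfl⟩, ⟨y, hy, rfl⟩⟩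

lemma sim_castLE : ∀ {m n : ℕ} (hmn : m ≤ n) (hn : n ≤ T) {x y : Fin (n+2) → Q},
    sim P n x y →
    sim P m (x ∘ Fin.castLE (by omega)) (y ∘ Fin.castLE (by omega)) := by
  intro m n
  induction n with
  | zero =>
    intro hmn hn x y h
    have hm0 : m = 0 := by omega
    subst hm0
    have e : ∀ v : Fin 2 → Q, v ∘ Fin.castLE (by omega : 0+2 ≤ 0+2) = v := by
      intro v; funext p; exact congrArg v (Fin.ext rfl)
    rw [e, e]; exact h
  | succ n ih =>
    intro hmn hn x y h
    by_cases hm : m = n+1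
    · subst hm
      have e : ∀ v : Fin (n+3) → Q, v ∘ Fin.castLE (by omega : n+3 ≤ n+3) = v := by
        intro v; funext p; exact congrArg v (Fin.ext rfl)
      rw [e, e]; exact h
    · have hmn' : m ≤ n := by omega
      have h2 := ih hmn' (by omega) (sim_castSucc hn h)
      have e : ∀ v : Fin (n+3) → Q,
          (v ∘ Fin.castSucc) ∘ Fin.castLE (by omega : m+2 ≤ n+2) = v ∘ Fin.castLE (by omega) := by
        intro v; funext p; exact congrArg v (Fin.ext rfl)
      rw [e, e] at h2; exact h2

lemma sim_inj {m n : ℕ} (hmn : m ≤ n) (hn : n ≤ T) (e : Fin (m+2) → Fin (n+2))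
    (he : Injective e) {x y : Fin (n+2) → Q} (h : sim P n x y) :
    sim P m (x ∘ e) (y ∘ e) := by
  classical
  let A : Fin (m+2) ≃ {a : Fin (n+2) // a.1 < m+2} :=
    { toFun := fun i => ⟨Fin.castLE (by omega) i, i.2⟩
      invFun := fun a => ⟨a.1.1, a.2⟩
      left_inv := fun i => Fin.ext rfl
      right_inv := fun a => Subtype.ext (Fin.ext rfl) }
  let E : {a : Fin (n+2) // a.1 < m+2} ≃ {a : Fin (n+2) // a ∈ Set.range e} :=
    A.symm.trans (Equiv.ofInjective e he)
  let τ : Equiv.Perm (Fin (n+2)) := E.extendSubtype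
  have hτ : ∀ i : Fin (m+2), τ (Fin.castLE (by omega) i) = e i := by
    intro i
    have hp : (Fin.castLE (by omega : m+2 ≤ n+2) i).1 < m+2 := i.2
    rw [show τ (Fin.castLE (by omega) i) = E.extendSubtype (Fin.castLE (by omega) i) from rfl,
      Equiv.extendSubtype_apply_of_mem E _ hp]
    show ((Equiv.ofInjective e he) (A.symm ⟨_, hp⟩)).1 = e i
    have hA : A.symm ⟨Fin.castLE (by omega) i, hp⟩ = i := Fin.ext rfl
    rw [hA]
    rfl
  have h2 := sim_castLE hmn hn (sim_perm hn τ h)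
  have e1 : ∀ v : Fin (n+2) → Q, (v ∘ ⇑τ) ∘ Fin.castLE (by omega : m+2 ≤ n+2) = v ∘ e := by
    intro v; funext i; exact congrArg v (hτ i)
  rw [e1, e1] at h2; exact h2

lemma sim_pattern {n : ℕ} (hn : n ≤ T) {x y : Fin (n+2) → Q} (h : sim P n x y)
    (i j : Fin (n+2)) : x i = x j ↔ y i = y j := by
  by_cases hij : i = j
  · subst hij; simp
  · set e : Fin 2 → Fin (n+2) := fun p => if p = 0 then i else j with he_def
    have he : Injective e := by
      intro a b hab
      fin_cases a <;> fin_cases b <;> simp_all [e]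
    have h0 : sim P 0 (x ∘ e) (y ∘ e) := sim_inj (by omega) hn e he h
    have key : ∀ {u v : Fin (n+2) → Q}, sim P 0 (u ∘ e) (v ∘ e) → u i = u j → v i = v j := by
      intro u v h0 huv
      have hue : (u ∘ e) ∈ {w : Fin 2 → Q | w 0 = w 1} := by
        simp only [Set.mem_setOf_eq, comp_apply, he_def]
        simpa using huv
      have := mem_of_sim (by omega) P.identity hue h0
      simpa [he_def] using this
    exact ⟨key h0, key (sim_symm h0)⟩

lemma sim_snoc_mem {n : ℕ} (hn1 : n+1 ≤ T) {x : Fin (n+3) → Q} {y : Fin (n+2) → Q}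
    (h : sim P n (x ∘ Fin.castSucc) y) : ∃ a, sim P (n+1) x (Fin.snoc y a) := by
  obtain ⟨C, ⟨hCmem, hCx⟩, -⟩ := P.partition (n+1) hn1 x
  have hD := P.proj n hn1 C hCmem
  have hyD : y ∈ {v : Fin (n+2) → Q | ∃ u ∈ C, v = u ∘ Fin.castSucc} :=
    mem_of_sim (by omega) hD ⟨x, hCx, rfl⟩ h
  obtain ⟨u, hu, hyu⟩ := hyD
  refine ⟨u (Fin.last (n+2)), ?_⟩
  have : (Fin.snoc y (u (Fin.last (n+2))) : Fin (n+3) → Q) = u := by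
    funext p
    cases p using Fin.lastCases with
    | last => rw [Fin.snoc_last]
    | cast q => rw [Fin.snoc_castSucc, hyu]; rfl
  rw [this]
  exact ⟨C, hCmem, hCx, hu⟩

lemma sim_snoc_dup {n : ℕ} (hn1 : n+1 ≤ T) (j : Fin (n+2)) {x y : Fin (n+2) → Q}
    (h : sim P n x y) :
    sim P (n+1) (Fin.snoc x (x j)) (Fin.snoc y (y j)) := by
  have hcs : (Fin.snoc x (x j) : Fin (n+3) → Q) ∘ Fin.castSucc = x := by
    funext q; exact Fin.snoc_castSucc _ _ _
  obtain ⟨a, ha⟩ := sim_snoc_mem hn1 (x := Fin.snoc x (x j)) (y := y) (by rwa [hcs])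
  have hpat := sim_pattern (by omega) ha (Fin.castSucc j) (Fin.last (n+2))
  have hya : y j = a := by
    have h1 : (Fin.snoc y a : Fin (n+3) → Q) (Fin.castSucc j) = (Fin.snoc y a : Fin (n+3) → Q) (Fin.last (n+2)) := by
      apply hpat.mp
      rw [Fin.snoc_castSucc, Fin.snoc_last]
    rwa [Fin.snoc_castSucc, Fin.snoc_last] at h1
  rwa [hya]

lemma sim_col {m : ℕ} (hm1 : m+1 ≤ T) {i j : Fin (m+3)} (hij : i ≠ j) {u v : Fin (m+2) → Q}
    (h : sim P m u v) :
    sim P (m+1) (u ∘ colIdx i j) (v ∘ colIdx i j) := by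
  set c := colIdx i j i with hc
  set τf : Fin (m+3) → Fin (m+3) :=
    fun p => if p = j then Fin.last (m+2) else Fin.castSucc (colIdx i j p) with hτf
  have hτinj : Injective τf := by
    intro a b hab
    by_cases ha : a = j <;> by_cases hb : b = j
    · rw [ha, hb]
    · exfalso
      simp only [hτf, if_pos ha, if_neg hb] at hab
      have := congrArg Fin.val hab
      simp only [Fin.val_last, Fin.coe_castSucc] at this
      have := (colIdx i j b).2
      omega
    · exfalso
      simp only [hτf, if_pos hb, if_neg ha] at hab
      have := congrArg Fin.val hab
      simp only [Fin.val_last, Fin.coe_castSucc] at this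
      have := (colIdx i j a).2
      omega
    · simp only [hτf, if_neg ha, if_neg hb] at hab
      have hcol : colIdx i j a = colIdx i j b := Fin.castSucc_injective _ hab
      rw [← delIdx_colIdx i j a ha, hcol, delIdx_colIdx i j b hb]
  let τ : Equiv.Perm (Fin (m+3)) := Equiv.ofBijective τf (Finite.injective_iff_bijective.mp hτinj)
  have hdup := sim_snoc_dup hm1 c h
  have hperm := sim_perm (by omega : m+1 ≤ T) τ hdup
  have hcoe : ⇑τ = τf := rfl
  rw [hcoe] at hperm
  have key : ∀ w : Fin (m+2) → Q, (Fin.snoc w (w c) : Fin (m+3) → Q) ∘ τf = w ∘ colIdx i j := by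
    intro w; funext p
    by_cases hp : p = j
    · subst hp
      have hτp : τf p = Fin.last (m+2) := by simp [hτf]
      simp only [comp_apply, hτp, Fin.snoc_last]
      rw [hc, colIdx_self i p hij]
    · simp only [comp_apply, hτf, if_neg hp, Fin.snoc_castSucc]
  rw [key u, key v] at hperm
  exact hperm

lemma sim_comp : ∀ {m : ℕ} (hm : m ≤ T) {n : ℕ} (hn : n ≤ T) (f : Fin (m+2) → Fin (n+2))
    {x y : Fin (n+2) → Q}, sim P n x y → sim P m (x ∘ f) (y ∘ f) := by
  intro m
  induction m with
  | zero =>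
    intro hm n hn f x y h
    by_cases hf : Injective f
    · exact sim_inj (by omega) hn f hf h
    · have hff : f 1 = f 0 := by
        unfold Injective at hf
        push_neg at hf
        obtain ⟨a, b, hab, hne⟩ := hf
        fin_cases a <;> fin_cases b <;> simp_all
      refine ⟨{v : Fin 2 → Q | v 0 = v 1}, P.identity, ?_, ?_⟩ <;>
        simp only [Set.mem_setOf_eq, comp_apply, hff]
  | succ m ih =>
    intro hm n hn f x y h
    by_cases hf : Injective f
    · have hmn : m+1 ≤ n := by
        have := Fintype.card_le_of_injective f hf
        simp only [Fintype.card_fin] at this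
        omega
      exact sim_inj hmn hn f hf h
    · obtain ⟨i, j, hfij, hij⟩ : ∃ i j, f i = f j ∧ i ≠ j := by
        unfold Injective at hf
        push_neg at hf
        obtain ⟨a, b, hab, hne⟩ := hf
        exact ⟨a, b, hab, hne⟩
      have hfe := eq_comp_colIdx hij f hfij
      have h2 := sim_col hm hij (ih (by omega) hn (f ∘ delIdx j) h)
      have hx : x ∘ f = (x ∘ (f ∘ delIdx j)) ∘ colIdx i j := by
        conv_lhs => rw [hfe]
        rfl
      have hy : y ∘ f = (y ∘ (f ∘ delIdx j)) ∘ colIdx i j := by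
        conv_lhs => rw [hfe]
        rfl
      rw [hx, hy]
      exact h2
variable (P) in
/-- window equivalence at any length -/
def SimL (ℓ : ℕ) (x y : Fin ℓ → Q) : Prop :=
  ∀ g : Fin (T+2) → Fin ℓ, sim P T (x ∘ g) (y ∘ g)

lemma simL_comp {ℓ ℓ' : ℕ} (f : Fin ℓ' → Fin ℓ) {x y : Fin ℓ → Q} (h : SimL P ℓ x y) :
    SimL P ℓ' (x ∘ f) (y ∘ f) := fun g => h (f ∘ g)

lemma simL_refl {ℓ : ℕ} (x : Fin ℓ → Q) : SimL P ℓ x x := fun _ => sim_refl le_rfl _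

lemma simL_symm {ℓ : ℕ} {x y : Fin ℓ → Q} (h : SimL P ℓ x y) : SimL P ℓ y x :=
  fun g => sim_symm (h g)

lemma simL_trans {ℓ : ℕ} {x y z : Fin ℓ → Q} (h1 : SimL P ℓ x y) (h2 : SimL P ℓ y z) :
    SimL P ℓ x z := fun g => sim_trans le_rfl (h1 g) (h2 g)

lemma simL_iff_sim {k : ℕ} (hk : k ≤ T) {x y : Fin (k+2) → Q} :
    SimL P (k+2) x y ↔ sim P k x y := by
  constructor
  · intro h
    set g : Fin (T+2) → Fin (k+2) := fun p => ⟨min p.1 (k+1), by omega⟩ with hg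
    have h2 := sim_comp hk le_rfl (Fin.castLE (by omega)) (h g)
    have e : ∀ v : Fin (k+2) → Q, (v ∘ g) ∘ Fin.castLE (by omega : k+2 ≤ T+2) = v := by
      intro v; funext p
      refine congrArg v (Fin.ext ?_)
      simp only [hg, Fin.coe_castLE]
      have := p.2
      omega
    rwa [e, e] at h2
  · intro h g
    exact sim_comp le_rfl hk g h

lemma simL_pattern {ℓ : ℕ} {x y : Fin ℓ → Q} (h : SimL P ℓ x y) (i j : Fin ℓ) :
    x i = x j ↔ y i = y j := by
  set g : Fin (T+2) → Fin ℓ := fun p => if p.1 = 0 then i else j with hg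
  have hp := sim_pattern le_rfl (h g) ⟨0, by omega⟩ ⟨1, by omega⟩
  simpa [hg] using hp

variable (P) in
noncomputable def classOf {n : ℕ} (hn : n ≤ T) (x : Fin (n+2) → Q) : Set (Fin (n+2) → Q) :=
  (P.partition n hn x).choose

lemma classOf_mem {n : ℕ} (hn : n ≤ T) (x : Fin (n+2) → Q) : classOf P hn x ∈ P.Γ n :=
  (P.partition n hn x).choose_spec.1.1

lemma mem_classOf {n : ℕ} (hn : n ≤ T) (x : Fin (n+2) → Q) : x ∈ classOf P hn x :=
  (P.partition n hn x).choose_spec.1.2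

lemma classOf_eq {n : ℕ} (hn : n ≤ T) {C : Set (Fin (n+2) → Q)} (hC : C ∈ P.Γ n)
    {x : Fin (n+2) → Q} (hx : x ∈ C) : classOf P hn x = C :=
  class_eq hn (classOf_mem hn x) hC (mem_classOf hn x) hx

lemma ncard_setOf_eq_filter (p : Q → Prop) [DecidablePred p] :
    {z : Q | p z}.ncard = (Finset.univ.filter p).card := by
  rw [← Set.ncard_coe_finset]
  congr 1
  ext z
  simp

/-- two-element tuple -/
def pairT (z a : Q) : Fin 2 → Q := Fin.cons z (fun _ : Fin 1 => a)
lemma star_lemma (hT : Fintype.card Q ≤ T + 2) :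
    ∀ ℓ : ℕ, ∀ S : Set (Fin (ℓ+2) → Q),
      (∀ y y' : Fin (ℓ+2) → Q, SimL P (ℓ+2) y y' → y ∈ S → y' ∈ S) →
      ∀ w w' : Fin (ℓ+1) → Q, SimL P (ℓ+1) w w' →
      {z : Q | Fin.snoc w z ∈ S}.ncard = {z : Q | Fin.snoc w' z ∈ S}.ncard := by
  intro ℓ
  induction ℓ using Nat.strong_induction_on with
  | _ ℓ IH =>
  intro S hS w w' hww
  by_cases hbase : ℓ ≤ T
  · -- base case via P.inter
    classical
    set f0 : Fin (ℓ+2) → Fin (ℓ+1) := fun p => if h : p.1 < ℓ+1 then ⟨p.1, h⟩ else 0 with hf0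
    have hW : ∀ u : Fin (ℓ+1) → Q, u ∘ f0 = Fin.snoc u (u 0) := by
      intro u; funext p
      by_cases hp : p.1 < ℓ+1
      · rw [snoc_lt u (u 0) p hp]
        simp only [comp_apply, hf0, dif_pos hp]
      · rw [snoc_last' u (u 0) p (by omega)]
        simp only [comp_apply, hf0, dif_neg hp]
    have hsimW : sim P ℓ (Fin.snoc w (w 0)) (Fin.snoc w' (w' 0)) := by
      have h1 := simL_comp f0 hww
      rw [hW w, hW w'] at h1
      exact (simL_iff_sim hbase).mp h1
    have hfst : ∀ (u : Fin (ℓ+1) → Q) (z : Q),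
        fstTup ℓ 0 (Fin.snoc u (u 0)) z = Fin.snoc u z := by
      intro u z; funext p
      unfold fstTup
      by_cases hp : p.1 < ℓ+1
      · rw [snoc_lt _ z p hp, snoc_lt u z p hp]
        exact snoc_lt u (u 0) _ hp
      · rw [snoc_last' _ z p (by omega), snoc_last' u z p (by omega)]
    have hsnd : ∀ (u : Fin (ℓ+1) → Q) (z : Q),
        sndTup ℓ 0 (Fin.snoc u (u 0)) z = pairT z (u 0) := by
      intro u z; funext p
      unfold sndTup pairT
      by_cases hp : p.1 = 0
      · have : p = 0 := Fin.ext hp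
        subst this
        rw [Fin.cons_zero, Fin.cons_zero]
      · have hp1 : 0 < p.1 := by omega
        have hp2 : p.1 - 1 < 1 := by have := p.2; omega
        rw [cons_pos _ _ p hp1 hp2, cons_pos _ _ p hp1 hp2]
        exact snoc_last' u (u 0) _ (by simp only [Fin.val_mk]; omega)
    set κ : (Fin (ℓ+1) → Q) → Q → (Set (Fin (ℓ+2) → Q) × Set (Fin 2 → Q)) :=
      fun v z => (classOf P hbase (Fin.snoc v z), classOf P (Nat.zero_le T) (pairT z (v 0)))
      with hκ
    set A : Finset Q := Finset.univ.filter (fun z => Fin.snoc w z ∈ S) with hA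
    set A' : Finset Q := Finset.univ.filter (fun z => Fin.snoc w' z ∈ S) with hA'
    set tset : Finset (Set (Fin (ℓ+2) → Q) × Set (Fin 2 → Q)) :=
      A.image (κ w) ∪ A'.image (κ w') with htset
    have hgood : ∀ b ∈ tset, b.1 ∈ P.Γ ℓ ∧ b.2 ∈ P.Γ 0 ∧ b.1 ⊆ S := by
      intro b hb
      have : (∃ z0, Fin.snoc w z0 ∈ S ∧ κ w z0 = b) ∨
          (∃ z0, Fin.snoc w' z0 ∈ S ∧ κ w' z0 = b) := by
        rcases Finset.mem_union.mp hb with hb' | hb'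
        · obtain ⟨z0, hz0, hbz⟩ := Finset.mem_image.mp hb'
          exact Or.inl ⟨z0, (Finset.mem_filter.mp hz0).2, hbz⟩
        · obtain ⟨z0, hz0, hbz⟩ := Finset.mem_image.mp hb'
          exact Or.inr ⟨z0, (Finset.mem_filter.mp hz0).2, hbz⟩
      have key : ∀ (v : Fin (ℓ+1) → Q) z0, Fin.snoc v z0 ∈ S → κ v z0 = b →
          b.1 ∈ P.Γ ℓ ∧ b.2 ∈ P.Γ 0 ∧ b.1 ⊆ S := by
        intro v z0 hz0S hbz
        rw [← hbz]
        simp only [hκ]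
        refine ⟨classOf_mem hbase _, classOf_mem (Nat.zero_le T) _, ?_⟩
        intro y hy
        have hsim : sim P ℓ (Fin.snoc v z0) y :=
          ⟨_, classOf_mem hbase _, mem_classOf hbase _, hy⟩
        exact hS _ _ ((simL_iff_sim hbase).mpr hsim) hz0S
      rcases this with ⟨z0, h1, h2⟩ | ⟨z0, h1, h2⟩
      · exact key w z0 h1 h2
      · exact key w' z0 h1 h2
    have hfiber : ∀ b : Set (Fin (ℓ+2) → Q) × Set (Fin 2 → Q),
        b.1 ∈ P.Γ ℓ → b.2 ∈ P.Γ 0 → b.1 ⊆ S → ∀ v : Fin (ℓ+1) → Q,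
        (Finset.univ.filter (fun z => Fin.snoc v z ∈ S)).filter (fun z => κ v z = b)
          = Finset.univ.filter (fun z => Fin.snoc v z ∈ b.1 ∧ pairT z (v 0) ∈ b.2) := by
      intro b h1 h2 h3 v
      ext z
      simp only [Finset.mem_filter, Finset.mem_univ, true_and]
      constructor
      · rintro ⟨hzS, hzb⟩
        rw [← hzb]
        simp only [hκ]
        exact ⟨mem_classOf hbase _, mem_classOf (Nat.zero_le T) _⟩
      · rintro ⟨hb1, hb2⟩
        refine ⟨h3 hb1, ?_⟩
        have e1 : classOf P hbase (Fin.snoc v z) = b.1 := classOf_eq _ h1 hb1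
        have e2 : classOf P (Nat.zero_le T) (pairT z (v 0)) = b.2 := classOf_eq _ h2 hb2
        simp only [hκ]
        rw [e1, e2]
    have hcount : ∀ b : Set (Fin (ℓ+2) → Q) × Set (Fin 2 → Q),
        b.1 ∈ P.Γ ℓ → b.2 ∈ P.Γ 0 →
        (Finset.univ.filter (fun z => Fin.snoc w z ∈ b.1 ∧ pairT z (w 0) ∈ b.2)).card
          = (Finset.univ.filter (fun z => Fin.snoc w' z ∈ b.1 ∧ pairT z (w' 0) ∈ b.2)).card := by
      intro b h1 h2
      have hCk := classOf_mem (P := P) hbase (Fin.snoc w (w 0))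
      have hW1 := mem_classOf (P := P) hbase (Fin.snoc w (w 0))
      have hW2 : Fin.snoc w' (w' 0) ∈ classOf P hbase (Fin.snoc w (w 0)) :=
        mem_of_sim hbase hCk hW1 hsimW
      have hint := P.inter ℓ 0 (by omega) b.1 h1 b.2 h2
        (classOf P hbase (Fin.snoc w (w 0))) hCk _ hW1 _ hW2
      have conv : ∀ (u : Fin (ℓ+1) → Q),
          {z : Q | fstTup ℓ 0 (Fin.snoc u (u 0)) z ∈ b.1 ∧
            sndTup ℓ 0 (Fin.snoc u (u 0)) z ∈ b.2}.ncard
          = (Finset.univ.filter (fun z => Fin.snoc u z ∈ b.1 ∧ pairT z (u 0) ∈ b.2)).card := by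
        intro u
        rw [show {z : Q | fstTup ℓ 0 (Fin.snoc u (u 0)) z ∈ b.1 ∧
            sndTup ℓ 0 (Fin.snoc u (u 0)) z ∈ b.2}
            = {z : Q | Fin.snoc u z ∈ b.1 ∧ pairT z (u 0) ∈ b.2} from by
          ext z
          simp only [Set.mem_setOf_eq]
          rw [hfst u z, hsnd u z]]
        exact ncard_setOf_eq_filter _
      rw [conv w, conv w'] at hint
      exact hint
    have hsum : A.card = A'.card := by
      rw [Finset.card_eq_sum_card_fiberwise
        (f := κ w) (t := tset)
        (fun z hz => Finset.mem_union_left _ (Finset.mem_image_of_mem _ hz))]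
      rw [Finset.card_eq_sum_card_fiberwise
        (f := κ w') (t := tset)
        (fun z hz => Finset.mem_union_right _ (Finset.mem_image_of_mem _ hz))]
      refine Finset.sum_congr rfl ?_
      intro b hb
      obtain ⟨hb1, hb2, hb3⟩ := hgood b hb
      rw [hA, hfiber b hb1 hb2 hb3 w, hA', hfiber b hb1 hb2 hb3 w']
      exact hcount b hb1 hb2
    rw [ncard_setOf_eq_filter, ncard_setOf_eq_filter]
    exact hsum
  · push_neg at hbase
    by_cases hwinj : Function.Injective w
    · -- w is a bijection onto Q
      have hwinj' : Function.Injective w' := by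
        intro a b hab
        exact hwinj ((simL_pattern hww a b).mpr hab)
      have hcard : ℓ + 1 = Fintype.card Q := by
        have h1 : ℓ+1 ≤ Fintype.card Q := by
          simpa using Fintype.card_le_of_injective w hwinj
        omega
      have hbij : Function.Bijective w :=
        (Fintype.bijective_iff_injective_and_card w).mpr ⟨hwinj, by simp [← hcard]⟩
      have hbij' : Function.Bijective w' :=
        (Fintype.bijective_iff_injective_and_card w').mpr ⟨hwinj', by simp [← hcard]⟩
      set ew : Fin (ℓ+1) ≃ Q := Equiv.ofBijective w hbij with hew
      set ew' : Fin (ℓ+1) ≃ Q := Equiv.ofBijective w' hbij' with hew'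
      set φ : Q ≃ Q := ew.symm.trans ew' with hφ
      set r : Fin (ℓ+1) → Fin (ℓ+2) → Fin (ℓ+1) :=
        fun i p => if h : p.1 < ℓ+1 then ⟨p.1, h⟩ else i with hr
      have hrid : ∀ (u : Fin (ℓ+1) → Q) (i : Fin (ℓ+1)),
          u ∘ (r i) = Fin.snoc u (u i) := by
        intro u i; funext p
        by_cases hp : p.1 < ℓ+1
        · rw [snoc_lt u (u i) p hp]
          simp only [comp_apply, hr, dif_pos hp]
        · rw [snoc_last' u (u i) p (by omega)]
          simp only [comp_apply, hr, dif_neg hp]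
      have hkey : ∀ i : Fin (ℓ+1), Fin.snoc w (w i) ∈ S ↔ Fin.snoc w' (w' i) ∈ S := by
        intro i
        have h1 := simL_comp (r i) hww
        rw [hrid w i, hrid w' i] at h1
        exact ⟨hS _ _ h1, hS _ _ (simL_symm h1)⟩
      have hiff : ∀ z : Q, Fin.snoc w z ∈ S ↔ Fin.snoc w' (φ z) ∈ S := by
        intro z
        have hz : w (ew.symm z) = z := ew.apply_symm_apply z
        have hφz : φ z = w' (ew.symm z) := rfl
        have h1 := hkey (ew.symm z)
        rw [hz] at h1
        rw [hφz]
        exact h1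
      have himg : {z : Q | Fin.snoc w' z ∈ S} = φ '' {z : Q | Fin.snoc w z ∈ S} := by
        have hpre : {z : Q | Fin.snoc w z ∈ S} = φ ⁻¹' {z : Q | Fin.snoc w' z ∈ S} := by
          ext z; exact hiff z
        rw [hpre, Set.image_preimage_eq _ φ.surjective]
      rw [himg, Set.ncard_image_of_injective _ φ.injective]
    · -- w has a repeated entry: collapse
      obtain ⟨i, j, hwij, hij⟩ : ∃ i j, w i = w j ∧ i ≠ j := by
        unfold Function.Injective at hwinj
        push_neg at hwinj
        obtain ⟨a, b, hab, hne⟩ := hwinj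
        exact ⟨a, b, hab, hne⟩
      obtain ⟨ℓ', rfl⟩ : ∃ ℓ', ℓ = ℓ'+1 := ⟨ℓ-1, by omega⟩
      set ρ : Fin (ℓ'+3) → Fin (ℓ'+2) :=
        fun p => if h : p.1 = ℓ'+2 then Fin.last (ℓ'+1)
          else Fin.castSucc (colIdx i j ⟨p.1, by have := p.2; omega⟩) with hρ
      set Sm : Set (Fin (ℓ'+2) → Q) := {u | u ∘ ρ ∈ S} with hSm
      have hkey : ∀ (u : Fin (ℓ'+2) → Q), u i = u j → ∀ z : Q,
          (Fin.snoc (u ∘ delIdx j) z) ∘ ρ = Fin.snoc u z := by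
        intro u hu z
        funext p
        by_cases hp : p.1 = ℓ'+2
        · simp only [comp_apply, hρ, dif_pos hp]
          rw [Fin.snoc_last, snoc_last' u z p hp]
        · simp only [comp_apply, hρ, dif_neg hp]
          rw [Fin.snoc_castSucc, snoc_lt u z p (by have := p.2; omega)]
          show u (delIdx j (colIdx i j _)) = _
          by_cases hpj : (⟨p.1, by have := p.2; omega⟩ : Fin (ℓ'+2)) = j
          · rw [hpj, colIdx_self i j hij, delIdx_colIdx i j i hij, hu, ← hpj]
          · rw [delIdx_colIdx i j _ hpj]
      have hSm_sat : ∀ y y' : Fin (ℓ'+2) → Q, SimL P (ℓ'+2) y y' → y ∈ Sm → y' ∈ Sm := by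
        intro y y' h hy
        exact hS _ _ (simL_comp ρ h) hy
      have hw'ij : w' i = w' j := (simL_pattern hww i j).mp hwij
      have hA : {z : Q | Fin.snoc w z ∈ S} = {z : Q | Fin.snoc (w ∘ delIdx j) z ∈ Sm} := by
        ext z
        simp only [Set.mem_setOf_eq, hSm, hkey w hwij z]
      have hA' : {z : Q | Fin.snoc w' z ∈ S} = {z : Q | Fin.snoc (w' ∘ delIdx j) z ∈ Sm} := by
        ext z
        simp only [Set.mem_setOf_eq, hSm, hkey w' hw'ij z]
      rw [hA, hA']
      exact IH ℓ' (by omega) Sm hSm_sat _ _ (simL_comp (delIdx j) hww)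
variable (P) in
/-- extension of a presuperscheme of maximal height to arbitrary height -/
noncomputable def extScheme (t : ℕ) (hT : Fintype.card Q ≤ T + 2) : PreScheme Q t where
  Γ n := {C | ∃ x : Fin (n+2) → Q, C = {y | SimL P (n+2) x y}}
  nonempty := by
    rintro n hn C ⟨x, rfl⟩
    exact ⟨x, simL_refl x⟩
  partition := by
    intro n hn x
    refine ⟨{y | SimL P (n+2) x y}, ⟨⟨x, rfl⟩, simL_refl x⟩, ?_⟩
    rintro C ⟨⟨x', rfl⟩, hx⟩
    ext y
    simp only [Set.mem_setOf_eq]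
    exact ⟨fun h => simL_trans (simL_symm hx) h, fun h => simL_trans hx h⟩
  identity := by
    obtain ⟨x0, hx0⟩ := P.nonempty 0 (Nat.zero_le T) _ P.identity
    refine ⟨x0, ?_⟩
    ext y
    simp only [Set.mem_setOf_eq]
    constructor
    · intro hy
      exact (simL_iff_sim (Nat.zero_le T)).mpr ⟨_, P.identity, hx0, hy⟩
    · intro hy
      exact mem_of_sim (Nat.zero_le T) P.identity hx0 ((simL_iff_sim (Nat.zero_le T)).mp hy)
  proj := by
    rintro n hn C ⟨x, rfl⟩
    refine ⟨x ∘ Fin.castSucc, ?_⟩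
    ext y
    simp only [Set.mem_setOf_eq]
    constructor
    · rintro ⟨u, hu, rfl⟩
      exact simL_comp Fin.castSucc hu
    · intro hy
      set S : Set (Fin (n+3) → Q) := {v | SimL P (n+3) x v} with hSdef
      have hsat : ∀ a b : Fin (n+3) → Q, SimL P (n+3) a b → a ∈ S → b ∈ S := by
        intro a b hab ha
        exact simL_trans ha hab
      have hxS : x ∈ S := simL_refl x
      have hxsnoc : (Fin.snoc (x ∘ Fin.castSucc) (x (Fin.last (n+2))) : Fin (n+3) → Q) = x := by
        funext p
        cases p using Fin.lastCases with
        | last => rw [Fin.snoc_last]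
        | cast q => rw [Fin.snoc_castSucc]; rfl
      have hpos : (0 : ℕ) < {z : Q | Fin.snoc (x ∘ Fin.castSucc) z ∈ S}.ncard := by
        refine (Set.ncard_pos (Set.toFinite _)).mpr ⟨x (Fin.last (n+2)), ?_⟩
        show Fin.snoc (x ∘ Fin.castSucc) (x (Fin.last (n+2))) ∈ S
        rw [hxsnoc]
        exact hxS
      rw [star_lemma hT (n+1) S hsat _ _ hy] at hpos
      obtain ⟨z, hz⟩ := (Set.ncard_pos (Set.toFinite _)).mp hpos
      refine ⟨Fin.snoc y z, hz, ?_⟩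
      funext q
      simp
  invariant := by
    rintro n hn C ⟨x, rfl⟩ τ
    refine ⟨x ∘ ⇑τ⁻¹, ?_⟩
    ext y
    simp only [Set.mem_setOf_eq]
    have e1 : (y ∘ ⇑τ) ∘ ⇑τ⁻¹ = y := funext fun p => congrArg y (τ.apply_symm_apply p)
    have e2 : (x ∘ ⇑τ⁻¹) ∘ ⇑τ = x := funext fun p => congrArg x (τ.symm_apply_apply p)
    constructor
    · intro h
      have := simL_comp ⇑τ⁻¹ h
      rwa [e1] at this
    · intro h
      have := simL_comp ⇑τ h
      rwa [e2] at this
  inter := by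
    intro m n hmn Ci hCi Cj hCj Ck hCk w hw w' hw'
    obtain ⟨xi, rfl⟩ := hCi
    obtain ⟨xj, rfl⟩ := hCj
    obtain ⟨xk, rfl⟩ := hCk
    have hww : SimL P (m+n+2) w w' := simL_trans (simL_symm hw) hw'
    set f1 : Fin (m+2) → Fin (m+n+3) :=
      fun p => if h : p.1 < m+1 then ⟨p.1, by omega⟩ else ⟨m+n+2, by omega⟩ with hf1
    set f2 : Fin (n+2) → Fin (m+n+3) :=
      fun p => if h : p.1 = 0 then ⟨m+n+2, by omega⟩
        else ⟨m + p.1, by have := p.2; omega⟩ with hf2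
    have hI1 : ∀ (v : Fin (m+n+2) → Q) (z : Q), fstTup m n v z = (Fin.snoc v z) ∘ f1 := by
      intro v z; funext p
      unfold fstTup
      by_cases hp : p.1 < m+1
      · rw [snoc_lt _ z p hp]
        simp only [comp_apply, hf1, dif_pos hp]
        rw [snoc_lt v z _ (by simp only [Fin.val_mk]; omega)]
        exact congrArg v (Fin.ext rfl)
      · rw [snoc_last' _ z p (by omega)]
        simp only [comp_apply, hf1, dif_neg hp]
        rw [snoc_last' v z _ rfl]
    have hI2 : ∀ (v : Fin (m+n+2) → Q) (z : Q), sndTup m n v z = (Fin.snoc v z) ∘ f2 := by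
      intro v z; funext p
      unfold sndTup
      by_cases hp : p.1 = 0
      · have hp0 : p = 0 := Fin.ext hp
        subst hp0
        rw [Fin.cons_zero]
        simp only [comp_apply, hf2, dif_pos rfl]
        rw [snoc_last' v z _ rfl]
      · have hp1 : 0 < p.1 := by omega
        rw [cons_pos _ _ p hp1 (by have := p.2; omega)]
        simp only [comp_apply, hf2, dif_neg hp]
        rw [snoc_lt v z _ (by simp only [Fin.val_mk]; have := p.2; omega)]
        exact congrArg v (Fin.ext (by simp only [Fin.val_mk]; omega))
    set S : Set (Fin (m+n+3) → Q) :=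
      {y | SimL P (m+2) xi (y ∘ f1) ∧ SimL P (n+2) xj (y ∘ f2)} with hSdef
    have hsat : ∀ y y' : Fin (m+n+3) → Q, SimL P (m+n+3) y y' → y ∈ S → y' ∈ S := by
      intro y y' h hy
      exact ⟨simL_trans hy.1 (simL_comp f1 h), simL_trans hy.2 (simL_comp f2 h)⟩
    have hset : ∀ v : Fin (m+n+2) → Q,
        {z : Q | fstTup m n v z ∈ {y | SimL P (m+2) xi y} ∧
          sndTup m n v z ∈ {y | SimL P (n+2) xj y}} = {z : Q | Fin.snoc v z ∈ S} := by
      intro v; ext z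
      simp only [Set.mem_setOf_eq, hSdef]
      rw [hI1 v z, hI2 v z]
    rw [hset w, hset w']
    exact star_lemma hT (m+n+1) S hsat w w' hww

lemma extScheme_zero (t : ℕ) (hT : Fintype.card Q ≤ T + 2) :
    (extScheme P t hT).Γ 0 = P.Γ 0 := by
  ext C
  constructor
  · rintro ⟨x, rfl⟩
    have he : {y | SimL P 2 x y} = classOf P (Nat.zero_le T) x := by
      ext y
      simp only [Set.mem_setOf_eq]
      constructor
      · intro h
        exact mem_of_sim (Nat.zero_le T) (classOf_mem (Nat.zero_le T) x)
          (mem_classOf (Nat.zero_le T) x) ((simL_iff_sim (Nat.zero_le T)).mp h)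
      · intro h
        exact (simL_iff_sim (Nat.zero_le T)).mpr
          ⟨_, classOf_mem (Nat.zero_le T) x, mem_classOf (Nat.zero_le T) x, h⟩
    rw [he]
    exact classOf_mem (Nat.zero_le T) x
  · intro hC
    obtain ⟨x, hx⟩ := P.nonempty 0 (Nat.zero_le T) C hC
    refine ⟨x, ?_⟩
    ext y
    simp only [Set.mem_setOf_eq]
    constructor
    · intro hy
      exact (simL_iff_sim (Nat.zero_le T)).mpr ⟨C, hC, hx, hy⟩
    · intro hy
      exact mem_of_sim (Nat.zero_le T) hC hx ((simL_iff_sim (Nat.zero_le T)).mp hy)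
end StarExt

/-- an association scheme of order `d` is extensible to every
height iff it is extensible to height `d - 2`. -/
theorem stmt_14 {Q : Type} [Fintype Q] [Nonempty Q]
    (Γ0 : Set (Set (Q × Q))) (h : IsAssocScheme Q Γ0) :
    (∀ t : ℕ, Extensible Q Γ0 t) ↔ Extensible Q Γ0 (Fintype.card Q - 2) := by
  constructor
  · intro H
    exact H _
  · rintro ⟨P, hP⟩ t
    have hT : Fintype.card Q ≤ (Fintype.card Q - 2) + 2 := by omega
    refine ⟨StarExt.extScheme P t hT, ?_⟩
    rw [StarExt.extScheme_zero, hP]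
end
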